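/- arXiv:1502.02059 — 2 statements merged into one kernel-verified Lean document; each statement's English description precedes it below -/
import Mathlib

section
/- Let A be a (3,n)-net (n ≥ 2) satisfying the completeness identity ∑_{p∈X̄}(m_p−1) = 3(n−1), where X̄ is the set of intersection points of A not in X and m_p is the number of lines of A through p. Then each of the three blocks is a pencil. -/
open Finset

attribute [local instance] Classical.propDecidable

/-- A (3,n)-net satisfying the completeness identity has all blocks pencils. -/
theorem complete_three_net_blocks_are_pencils {P L : Type*} (n : ℕ) (hn : 2 ≤ n)
    (A : Fin 3 → Finset L) (lieOn : P → L → Prop)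
    (X Xbar : Finset P) (mp : P → ℕ)
    (hcard : ∀ i, (A i).card = n)
    (hdisj : ∀ i j : Fin 3, i ≠ j → Disjoint (A i) (A j))
    (hmeet : ∀ ℓ₁ ℓ₂ : L, (∃ i, ℓ₁ ∈ A i) → (∃ i, ℓ₂ ∈ A i) → ℓ₁ ≠ ℓ₂ →
      ∃! p, lieOn p ℓ₁ ∧ lieOn p ℓ₂)
    (hX : ∀ p, p ∈ X ↔ ∃ i j : Fin 3, i ≠ j ∧
      ∃ ℓ₁ ∈ A i, ∃ ℓ₂ ∈ A j, lieOn p ℓ₁ ∧ lieOn p ℓ₂)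
    (hnet : ∀ p ∈ X, ∀ i : Fin 3, ((A i).filter (fun ℓ => lieOn p ℓ)).card = 1)
    (hXbar : ∀ p, p ∈ Xbar ↔ p ∉ X ∧
      ∃ i : Fin 3, ∃ ℓ₁ ∈ A i, ∃ ℓ₂ ∈ A i, ℓ₁ ≠ ℓ₂ ∧ lieOn p ℓ₁ ∧ lieOn p ℓ₂)
    (hmp : ∀ p, mp p = ((A 0 ∪ A 1 ∪ A 2).filter (fun ℓ => lieOn p ℓ)).card)
    (hcomplete : ∑ p ∈ Xbar, (mp p - 1) = 3 * (n - 1)) :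
    ∀ i : Fin 3, ∃ q : P, ∀ ℓ ∈ A i, lieOn q ℓ := by
  classical
  -- all lines through a point of Xbar are in one block
  have hblock : ∀ p ∈ Xbar, ∀ j k : Fin 3, ∀ ℓ ∈ A j, ∀ ℓ' ∈ A k,
      lieOn p ℓ → lieOn p ℓ' → j = k := by
    intro p hp j k ℓ hℓ ℓ' hℓ' h1 h2
    by_contra hne
    exact ((hXbar p).1 hp).1 ((hX p).2 ⟨j, k, hne, ℓ, hℓ, ℓ', hℓ', h1, h2⟩)
  set T : Fin 3 → Finset P :=
    fun j => Xbar.filter (fun p => ∃ ℓ ∈ A j, lieOn p ℓ) with hT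
  have hTmem : ∀ j p, p ∈ T j ↔ p ∈ Xbar ∧ ∃ ℓ ∈ A j, lieOn p ℓ := by
    intro j p; simp [hT]
  -- intersection points of two lines of the same block lie in T j
  have hint : ∀ j : Fin 3, ∀ ℓ₁ ∈ A j, ∀ ℓ₂ ∈ A j, ℓ₁ ≠ ℓ₂ →
      ∀ p, lieOn p ℓ₁ → lieOn p ℓ₂ → p ∈ T j := by
    intro j ℓ₁ h1 ℓ₂ h2 hne p hp1 hp2
    have hpX : p ∉ X := by
      intro hpX
      have hc := hnet p hpX j
      have h2' : 1 < ((A j).filter (fun ℓ => lieOn p ℓ)).card :=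
        Finset.one_lt_card.mpr
          ⟨ℓ₁, by simp [h1, hp1], ℓ₂, by simp [h2, hp2], hne⟩
      omega
    have hpXbar : p ∈ Xbar := (hXbar p).2 ⟨hpX, j, ℓ₁, h1, ℓ₂, h2, hne, hp1, hp2⟩
    exact (hTmem j p).2 ⟨hpXbar, ℓ₁, h1, hp1⟩
  -- mp on T j
  have hmpT : ∀ j : Fin 3, ∀ p ∈ T j,
      mp p = ((A j).filter (fun ℓ => lieOn p ℓ)).card := by
    intro j p hp
    obtain ⟨hpXbar, ℓw, hℓw, hlw⟩ := (hTmem j p).1 hp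
    rw [hmp]
    congr 1
    ext ℓ
    simp only [Finset.mem_filter, Finset.mem_union]
    constructor
    · rintro ⟨(h0 | h1) | h2, hlie⟩
      · exact ⟨(hblock p hpXbar 0 j ℓ h0 ℓw hℓw hlie hlw) ▸ h0, hlie⟩
      · exact ⟨(hblock p hpXbar 1 j ℓ h1 ℓw hℓw hlie hlw) ▸ h1, hlie⟩
      · exact ⟨(hblock p hpXbar 2 j ℓ h2 ℓw hℓw hlie hlw) ▸ h2, hlie⟩
    · rintro ⟨hmem, hlie⟩
      refine ⟨?_, hlie⟩
      fin_cases j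
      · exact Or.inl (Or.inl hmem)
      · exact Or.inl (Or.inr hmem)
      · exact Or.inr hmem
  -- mp ≥ 2 on T j
  have hmp2 : ∀ j : Fin 3, ∀ p ∈ T j, 2 ≤ mp p := by
    intro j p hp
    obtain ⟨hpXbar, ℓw, hℓw, hlw⟩ := (hTmem j p).1 hp
    obtain ⟨_, k, ℓ₁, h1, ℓ₂, h2, hne, hl1, hl2⟩ := (hXbar p).1 hpXbar
    have hkj : k = j := hblock p hpXbar k j ℓ₁ h1 ℓw hℓw hl1 hlw
    subst hkj
    rw [hmpT k p hp]
    exact Finset.one_lt_card.mpr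
      ⟨ℓ₁, by simp [h1, hl1], ℓ₂, by simp [h2, hl2], hne⟩
  -- nonempty P
  have hPne : Nonempty P := by
    obtain ⟨ℓa, ha, ℓb, hb, hne⟩ :=
      Finset.one_lt_card.mp (by rw [hcard 0]; omega : 1 < (A 0).card)
    obtain ⟨p, -, -⟩ := hmeet ℓa ℓb ⟨0, ha⟩ ⟨0, hb⟩ hne
    exact ⟨p⟩
  -- the per-line count
  have hline : ∀ j : Fin 3, ∀ ℓ₀ ∈ A j,
      ∑ p ∈ (T j).filter (fun p => lieOn p ℓ₀), (mp p - 1) = n - 1 := by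
    intro j ℓ₀ hℓ₀
    set B := (A j).erase ℓ₀ with hB
    set f : L → P := fun ℓ =>
      if h : ℓ ∈ A j ∧ ℓ ≠ ℓ₀ then
        (hmeet ℓ ℓ₀ ⟨j, h.1⟩ ⟨j, hℓ₀⟩ h.2).choose
      else Classical.choice hPne with hf
    have hfspec : ∀ ℓ ∈ B, (lieOn (f ℓ) ℓ ∧ lieOn (f ℓ) ℓ₀) ∧
        ∀ y, (lieOn y ℓ ∧ lieOn y ℓ₀) → y = f ℓ := by
      intro ℓ hℓ
      have h : ℓ ∈ A j ∧ ℓ ≠ ℓ₀ :=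
        ⟨Finset.mem_of_mem_erase hℓ, Finset.ne_of_mem_erase hℓ⟩
      simp only [hf, dif_pos h]
      exact (hmeet ℓ ℓ₀ ⟨j, h.1⟩ ⟨j, hℓ₀⟩ h.2).choose_spec
    have hfmem : ∀ ℓ ∈ B, f ℓ ∈ (T j).filter (fun p => lieOn p ℓ₀) := by
      intro ℓ hℓ
      have h := hfspec ℓ hℓ
      refine Finset.mem_filter.2 ⟨?_, h.1.2⟩
      exact hint j ℓ (Finset.mem_of_mem_erase hℓ) ℓ₀ hℓ₀
        (Finset.ne_of_mem_erase hℓ) (f ℓ) h.1.1 h.1.2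
    have hcount := Finset.card_eq_sum_card_fiberwise hfmem
    have hBcard : B.card = n - 1 := by
      rw [hB, Finset.card_erase_of_mem hℓ₀, hcard j]
    rw [← hBcard, hcount]
    apply Finset.sum_congr rfl
    intro p hp
    obtain ⟨hpT, hpℓ₀⟩ := Finset.mem_filter.1 hp
    have hfib : B.filter (fun ℓ => f ℓ = p) = B.filter (fun ℓ => lieOn p ℓ) := by
      ext ℓ
      simp only [Finset.mem_filter, and_congr_right_iff]
      intro hℓB
      constructor
      · intro hfe; rw [← hfe]; exact (hfspec ℓ hℓB).1.1
      · intro hlie; exact ((hfspec ℓ hℓB).2 p ⟨hlie, hpℓ₀⟩).symm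
    rw [hfib]
    have : B.filter (fun ℓ => lieOn p ℓ)
        = ((A j).filter (fun ℓ => lieOn p ℓ)).erase ℓ₀ := by
      rw [hB, Finset.filter_erase]
    rw [this, Finset.card_erase_of_mem (by simp [hℓ₀, hpℓ₀]), ← hmpT j p hpT]
  -- the sum over T j is at least n - 1
  have hge : ∀ j : Fin 3, n - 1 ≤ ∑ p ∈ T j, (mp p - 1) := by
    intro j
    obtain ⟨ℓ₀, hℓ₀⟩ := Finset.card_pos.1 (by rw [hcard j]; omega)
    rw [← hline j ℓ₀ hℓ₀]
    exact Finset.sum_le_sum_of_subset (Finset.filter_subset _ _)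
  -- Xbar = T 0 ∪ T 1 ∪ T 2
  have hcover : Xbar = T 0 ∪ T 1 ∪ T 2 := by
    ext p
    simp only [Finset.mem_union]
    constructor
    · intro hp
      obtain ⟨-, k, ℓ₁, h1, ℓ₂, h2, hne, hl1, hl2⟩ := (hXbar p).1 hp
      have : p ∈ T k := (hTmem k p).2 ⟨hp, ℓ₁, h1, hl1⟩
      fin_cases k
      · exact Or.inl (Or.inl this)
      · exact Or.inl (Or.inr this)
      · exact Or.inr this
    · rintro ((h | h) | h) <;> exact ((hTmem _ p).1 h).1
  have hdisjT : ∀ j k : Fin 3, j ≠ k → Disjoint (T j) (T k) := by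
    intro j k hjk
    rw [Finset.disjoint_left]
    intro p hpj hpk
    obtain ⟨hpXbar, ℓ₁, h1, hl1⟩ := (hTmem j p).1 hpj
    obtain ⟨-, ℓ₂, h2, hl2⟩ := (hTmem k p).1 hpk
    exact hjk (hblock p hpXbar j k ℓ₁ h1 ℓ₂ h2 hl1 hl2)
  have hsplit : ∑ p ∈ Xbar, (mp p - 1)
      = ∑ p ∈ T 0, (mp p - 1) + ∑ p ∈ T 1, (mp p - 1) + ∑ p ∈ T 2, (mp p - 1) := by
    rw [hcover, Finset.sum_union, Finset.sum_union (hdisjT 0 1 (by decide))]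
    exact Finset.disjoint_union_left.2
      ⟨hdisjT 0 2 (by decide), hdisjT 1 2 (by decide)⟩
  -- each block sum equals n - 1
  have hEq : ∀ j : Fin 3, ∑ p ∈ T j, (mp p - 1) = n - 1 := by
    intro j
    have h0 := hge 0
    have h1 := hge 1
    have h2 := hge 2
    have := hsplit
    rw [hcomplete] at this
    have e0 : ∑ p ∈ T 0, (mp p - 1) = n - 1 := by omega
    have e1 : ∑ p ∈ T 1, (mp p - 1) = n - 1 := by omega
    have e2 : ∑ p ∈ T 2, (mp p - 1) = n - 1 := by omega
    fin_cases j
    · exact e0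
    · exact e1
    · exact e2
  -- conclude
  intro i
  obtain ⟨ℓa, ha, ℓb, hb, hne⟩ :=
    Finset.one_lt_card.mp (by rw [hcard i]; omega : 1 < (A i).card)
  obtain ⟨q, ⟨hqa, hqb⟩, -⟩ := hmeet ℓa ℓb ⟨i, ha⟩ ⟨i, hb⟩ hne
  have hqT : q ∈ T i := hint i ℓa ha ℓb hb hne q hqa hqb
  refine ⟨q, fun ℓ₀ hℓ₀ => ?_⟩
  by_contra hnot
  have hS : (T i).filter (fun p => lieOn p ℓ₀) ⊆ (T i).erase q := by
    intro p hp
    obtain ⟨hpT, hpl⟩ := Finset.mem_filter.1 hp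
    exact Finset.mem_erase.2 ⟨fun h => hnot (h ▸ hpl), hpT⟩
  have hle : ∑ p ∈ (T i).filter (fun p => lieOn p ℓ₀), (mp p - 1)
      ≤ ∑ p ∈ (T i).erase q, (mp p - 1) :=
    Finset.sum_le_sum_of_subset hS
  have hsum : (mp q - 1) + ∑ p ∈ (T i).erase q, (mp p - 1)
      = ∑ p ∈ T i, (mp p - 1) := Finset.add_sum_erase _ (fun p => mp p - 1) hqT
  have h2q := hmp2 i q hqT
  have hL := hline i ℓ₀ hℓ₀
  have hE := hEq i
  omega
end

section
/- If complex numbers λ, μ satisfy λ, μ ∉ {0,1} and λ ≠ μ, then the system μλ² − 3μλ + λ + μ² = 0, λμ² − 3λμ + μ + λ² = 0 has no solutions. -/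
open Finset

attribute [local instance] Classical.propDecidable

/-- The pencil conditions for blocks A₂ and A₃ of Stipins' family of (3,3)-nets
cannot hold simultaneously under the nondegeneracy assumptions. -/
theorem stipins_no_two_pencils (lam mu : ℂ)
    (hl0 : lam ≠ 0) (hl1 : lam ≠ 1) (hm0 : mu ≠ 0) (hm1 : mu ≠ 1)
    (hne : lam ≠ mu)
    (e1 : mu * lam ^ 2 - 3 * mu * lam + lam + mu ^ 2 = 0)
    (e2 : lam * mu ^ 2 - 3 * lam * mu + mu + lam ^ 2 = 0) :
    False := by
  have h : (lam - mu) * ((lam - 1) * (mu - 1)) = 0 := by linear_combination e1 - e2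
  rcases mul_eq_zero.mp h with h | h
  · exact hne (sub_eq_zero.mp h)
  rcases mul_eq_zero.mp h with h | h
  · exact hl1 (sub_eq_zero.mp h)
  · exact hm1 (sub_eq_zero.mp h)
end
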